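/- (Deterministic bound on ‖P_{T⊥}(B_*)‖_*, first half of Theorem 1.) Let λ > 0, ε ≥ 0, β > 1, and let Ω be a finite multiset of s index pairs from [m]×[n]. Let A_r ∈ ℝ^{m×n} satisfy P_T(A_r) = A_r, and let B ∈ ℝ^{m×n}. Set Γ = 2 s ε²/(m n) + 3 m n r log(2n) λ²/(8s). Assume: (i) (1/2)·⟨R_Ω(A_r − B), A_r − B⟩ + (λ/2)·‖P_{T⊥}(B)‖_* ≤ λ·√(r/(2n))·‖P_T(A_r − B)‖_F + Γ; (ii) the linear map (mn/s)·P_T∘R_Ω∘P_T − P_T on ℝ^{m×n} has operator norm at most 1/2 with respect to the Frobenius norm; (iii) R_Ω has operator norm at most (8/3)·√β·log(n) with respect to the Frobenius norm; (iv) (8 log(n)/3)·√(r m β/s) ≤ 1/4. Then ‖P_{T⊥}(B)‖_F ≤ ‖P_{T⊥}(B)‖_* ≤ 8 s ε²/(m n λ) + 3 m n r log(2n) λ/s. -/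

import Mathlib

open scoped BigOperators
open Matrix
open MeasureTheory

namespace MC

variable {m n r s : ℕ}

/-- Trace inner product `⟨X,Y⟩ = trace(Xᵀ Y)`. -/
def ip (A B : Matrix (Fin m) (Fin n) ℝ) : ℝ := ∑ i, ∑ j, A i j * B i j

/-- Frobenius norm. -/
noncomputable def fro (A : Matrix (Fin m) (Fin n) ℝ) : ℝ := Real.sqrt (ip A A)

/-- Largest absolute value of an entry. -/
noncomputable def infNorm (A : Matrix (Fin m) (Fin n) ℝ) : ℝ := ⨆ i, ⨆ j, |A i j|

/-- Nuclear norm: sum of singular values. -/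
noncomputable def nuclearNorm (A : Matrix (Fin m) (Fin n) ℝ) : ℝ :=
  ∑ j, Real.sqrt ((Matrix.isHermitian_conjTranspose_mul_self A).eigenvalues j)

/-- Spectral norm: largest singular value. -/
noncomputable def specNorm (A : Matrix (Fin m) (Fin n) ℝ) : ℝ :=
  ⨆ j, Real.sqrt ((Matrix.isHermitian_conjTranspose_mul_self A).eigenvalues j)

/-- Sampling operator for a multiset of index pairs. -/
def RΩ (Ω : Multiset (Fin m × Fin n)) (Z : Matrix (Fin m) (Fin n) ℝ) :
    Matrix (Fin m) (Fin n) ℝ :=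
  Matrix.of fun i j => (Ω.count (i, j)) * Z i j

def PT (U : Matrix (Fin m) (Fin r) ℝ) (V : Matrix (Fin n) (Fin r) ℝ)
    (Z : Matrix (Fin m) (Fin n) ℝ) : Matrix (Fin m) (Fin n) ℝ :=
  U * Uᵀ * Z + Z * (V * Vᵀ) - U * Uᵀ * Z * (V * Vᵀ)

def PTperp (U : Matrix (Fin m) (Fin r) ℝ) (V : Matrix (Fin n) (Fin r) ℝ)
    (Z : Matrix (Fin m) (Fin n) ℝ) : Matrix (Fin m) (Fin n) ℝ :=
  (1 - U * Uᵀ) * Z * (1 - V * Vᵀ)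

/-- Objective of nuclear-norm regularized least squares. -/
noncomputable def obj (Ω : Multiset (Fin m × Fin n)) (A : Matrix (Fin m) (Fin n) ℝ)
    (lam : ℝ) (B : Matrix (Fin m) (Fin n) ℝ) : ℝ :=
  (1 / 2) * (Ω.map fun p => (B p.1 p.2 - A p.1 p.2) ^ 2).sum + lam * nuclearNorm B

/-- Uniform probability measure on index pairs. -/
noncomputable def unifPair (m n : ℕ) : Measure (Fin m × Fin n) :=
  (Fintype.card (Fin m × Fin n) : ENNReal)⁻¹ • Measure.count

/-- Law of `s` i.i.d. uniform index pairs. -/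
noncomputable def sampleMeasure (m n s : ℕ) : Measure (Fin s → Fin m × Fin n) :=
  Measure.pi fun _ => unifPair m n

/-- The multiset of sampled indices. -/
def toMS (ω : Fin s → Fin m × Fin n) : Multiset (Fin m × Fin n) :=
  Multiset.map ω Finset.univ.val

/-!
Write `X = P_T(A_r - B)` and `Y = P_{T⊥}(B)`; since `P_T A_r = A_r`, `X = (A_r - B) + Y`.
The sampled seminorm `‖Z‖_Ω = √⟨R_Ω Z, Z⟩` is the Euclidean norm of `(√(count p) Z_p)_p`, so it
satisfies the triangle inequality. Hypothesis (ii) gives `‖X‖_F² ≤ (2mn/s) ‖X‖_Ω²` and (iii) gives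
`‖Y‖_Ω² ≤ κ ‖Y‖_F²` with `κ = (8/3) √β log n`, so the right-hand side of (i) is at most
`λ √(rm/s) (‖A_r - B‖_Ω + √κ ‖Y‖_*)` plus the constant term. AM–GM absorbs the first summand into
`‖A_r - B‖_Ω² / 2`, and (iv) gives `√(rm/s) √κ ≤ 1/4`, absorbing half of `λ/2 ‖Y‖_*`.
When `n ≤ 1`, (iii) forces `R_Ω = 0`, hence `s = 0`, and then every `x / s` is `0`.
-/

lemma ip_eq_sum_prod (A B : Matrix (Fin m) (Fin n) ℝ) :
    ip A B = ∑ p : Fin m × Fin n, A p.1 p.2 * B p.1 p.2 := by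
  rw [ip, ← Finset.univ_product_univ, Finset.sum_product]

lemma ip_eq_trace (A B : Matrix (Fin m) (Fin n) ℝ) : ip A B = (Aᵀ * B).trace := by
  simp only [ip, Matrix.trace, Matrix.diag, Matrix.mul_apply, Matrix.transpose_apply]
  exact Finset.sum_comm

lemma ip_self_nonneg (A : Matrix (Fin m) (Fin n) ℝ) : 0 ≤ ip A A :=
  Finset.sum_nonneg fun _ _ => Finset.sum_nonneg fun _ _ => mul_self_nonneg _

lemma fro_nonneg (A : Matrix (Fin m) (Fin n) ℝ) : 0 ≤ fro A := Real.sqrt_nonneg _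

lemma sq_fro (A : Matrix (Fin m) (Fin n) ℝ) : fro A ^ 2 = ip A A :=
  Real.sq_sqrt (ip_self_nonneg A)

lemma abs_ip_le_fro_mul_fro (A B : Matrix (Fin m) (Fin n) ℝ) : |ip A B| ≤ fro A * fro B := by
  rw [fro, fro, ← Real.sqrt_mul (ip_self_nonneg A)]
  refine Real.abs_le_sqrt ?_
  simpa only [ip_eq_sum_prod, pow_two] using
    Finset.sum_mul_sq_le_sq_mul_sq Finset.univ (fun p : Fin m × Fin n => A p.1 p.2)
      (fun p => B p.1 p.2)

lemma abs_apply_le_fro (A : Matrix (Fin m) (Fin n) ℝ) (i : Fin m) (j : Fin n) :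
    |A i j| ≤ fro A := by
  refine Real.abs_le_sqrt ?_
  rw [ip_eq_sum_prod, pow_two]
  exact Finset.single_le_sum (f := fun p : Fin m × Fin n => A p.1 p.2 * A p.1 p.2)
    (fun _ _ => mul_self_nonneg _) (Finset.mem_univ (i, j))

lemma ip_add_left (A B C : Matrix (Fin m) (Fin n) ℝ) : ip (A + B) C = ip A C + ip B C := by
  simp [ip, add_mul, Finset.sum_add_distrib]

lemma ip_sub_left (A B C : Matrix (Fin m) (Fin n) ℝ) : ip (A - B) C = ip A C - ip B C := by
  simp [ip, sub_mul, Finset.sum_sub_distrib]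

lemma ip_add_right (A B C : Matrix (Fin m) (Fin n) ℝ) : ip A (B + C) = ip A B + ip A C := by
  simp [ip, mul_add, Finset.sum_add_distrib]

lemma ip_sub_right (A B C : Matrix (Fin m) (Fin n) ℝ) : ip A (B - C) = ip A B - ip A C := by
  simp [ip, mul_sub, Finset.sum_sub_distrib]

lemma ip_smul_left (c : ℝ) (A B : Matrix (Fin m) (Fin n) ℝ) : ip (c • A) B = c * ip A B := by
  simp [ip, Finset.mul_sum, mul_assoc]

lemma ip_mul_left (M : Matrix (Fin m) (Fin m) ℝ) (A B : Matrix (Fin m) (Fin n) ℝ) :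
    ip (M * A) B = ip A (Mᵀ * B) := by
  rw [ip_eq_trace, ip_eq_trace, Matrix.transpose_mul, Matrix.mul_assoc]

lemma ip_mul_right (M : Matrix (Fin n) (Fin n) ℝ) (A B : Matrix (Fin m) (Fin n) ℝ) :
    ip (A * M) B = ip A (B * Mᵀ) := by
  rw [ip_eq_trace, ip_eq_trace, Matrix.transpose_mul, Matrix.mul_assoc,
    Matrix.trace_mul_comm, Matrix.mul_assoc]

lemma nuclearNorm_nonneg (A : Matrix (Fin m) (Fin n) ℝ) : 0 ≤ nuclearNorm A :=
  Finset.sum_nonneg fun _ _ => Real.sqrt_nonneg _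

lemma fro_le_nuclearNorm (A : Matrix (Fin m) (Fin n) ℝ) : fro A ≤ nuclearNorm A := by
  have hH := Matrix.isHermitian_conjTranspose_mul_self A
  have heig : ∀ j, 0 ≤ hH.eigenvalues j :=
    (Matrix.posSemidef_conjTranspose_mul_self A).eigenvalues_nonneg
  have htrace : ip A A = ∑ j, hH.eigenvalues j := by
    rw [ip_eq_trace, ← Matrix.conjTranspose_eq_transpose_of_trivial, hH.trace_eq_sum_eigenvalues]
    simp
  rw [fro, htrace, Real.sqrt_le_left (nuclearNorm_nonneg A), nuclearNorm]
  calc ∑ j, hH.eigenvalues j = ∑ j, Real.sqrt (hH.eigenvalues j) ^ 2 :=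
        Finset.sum_congr rfl fun j _ => (Real.sq_sqrt (heig j)).symm
    _ ≤ (∑ j, Real.sqrt (hH.eigenvalues j)) ^ 2 :=
        Finset.sum_sq_le_sq_sum_of_nonneg fun _ _ => Real.sqrt_nonneg _

section Projections

lemma transpose_mul_mul_cancel {k l : ℕ} {U : Matrix (Fin k) (Fin r) ℝ} (hU : Uᵀ * U = 1)
    (X : Matrix (Fin r) (Fin l) ℝ) : Uᵀ * (U * X) = X := by
  rw [← Matrix.mul_assoc, hU, Matrix.one_mul]

variable (U : Matrix (Fin m) (Fin r) ℝ) (V : Matrix (Fin n) (Fin r) ℝ)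

lemma PT_add_PTperp (Z : Matrix (Fin m) (Fin n) ℝ) : PT U V Z + PTperp U V Z = Z := by
  simp only [PT, PTperp, Matrix.sub_mul, Matrix.mul_sub, Matrix.one_mul, Matrix.mul_one]
  abel

lemma PTperp_sub (A B : Matrix (Fin m) (Fin n) ℝ) :
    PTperp U V (A - B) = PTperp U V A - PTperp U V B := by
  simp only [PTperp, Matrix.mul_sub (1 - U * Uᵀ), Matrix.sub_mul _ _ (1 - V * Vᵀ)]

lemma ip_PT_left (X Y : Matrix (Fin m) (Fin n) ℝ) : ip (PT U V X) Y = ip X (PT U V Y) := by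
  have hP : (U * Uᵀ)ᵀ = U * Uᵀ := by rw [Matrix.transpose_mul, Matrix.transpose_transpose]
  have hQ : (V * Vᵀ)ᵀ = V * Vᵀ := by rw [Matrix.transpose_mul, Matrix.transpose_transpose]
  simp only [PT, ip_sub_left, ip_add_left, ip_sub_right, ip_add_right]
  rw [ip_mul_left, hP, ip_mul_right, hQ, ip_mul_right, hQ, ip_mul_left, hP]
  simp only [Matrix.mul_assoc]

variable {U V}

lemma PT_PT (hU : Uᵀ * U = 1) (hV : Vᵀ * V = 1) (Z : Matrix (Fin m) (Fin n) ℝ) :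
    PT U V (PT U V Z) = PT U V Z := by
  simp only [PT, Matrix.add_mul, Matrix.mul_add, Matrix.sub_mul, Matrix.mul_sub, Matrix.mul_assoc,
    transpose_mul_mul_cancel hU, transpose_mul_mul_cancel hV]
  abel

lemma PTperp_PT (hU : Uᵀ * U = 1) (hV : Vᵀ * V = 1) (Z : Matrix (Fin m) (Fin n) ℝ) :
    PTperp U V (PT U V Z) = 0 := by
  simp only [PT, PTperp, Matrix.add_mul, Matrix.mul_add, Matrix.sub_mul, Matrix.mul_sub,
    Matrix.one_mul, Matrix.mul_one, Matrix.mul_assoc, transpose_mul_mul_cancel hU,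
    transpose_mul_mul_cancel hV]
  abel

lemma PT_sub_eq_add_PTperp (hU : Uᵀ * U = 1) (hV : Vᵀ * V = 1) {A : Matrix (Fin m) (Fin n) ℝ}
    (hA : PT U V A = A) (B : Matrix (Fin m) (Fin n) ℝ) : PT U V (A - B) = A - B + PTperp U V B := by
  have hA' : PTperp U V A = 0 := by rw [← hA]; exact PTperp_PT hU hV A
  have h := PT_add_PTperp U V (A - B)
  rw [PTperp_sub, hA', zero_sub] at h
  exact eq_add_of_sub_eq (by rwa [sub_eq_add_neg])

end Projections

lemma sqrt_ip_RΩ_self_eq_norm (Ω : Multiset (Fin m × Fin n)) (Z : Matrix (Fin m) (Fin n) ℝ) :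
    √(ip (RΩ Ω Z) Z) =
      ‖(WithLp.toLp 2 fun p : Fin m × Fin n => √(Ω.count p : ℝ) * Z p.1 p.2 :
        EuclideanSpace ℝ (Fin m × Fin n))‖ := by
  rw [EuclideanSpace.norm_eq, ip_eq_sum_prod]
  congr 1
  refine Finset.sum_congr rfl fun p _ => ?_
  rw [Real.norm_eq_abs, sq_abs, mul_pow, Real.sq_sqrt (Nat.cast_nonneg _)]
  simp only [RΩ, Matrix.of_apply]
  ring

lemma ip_RΩ_self_nonneg (Ω : Multiset (Fin m × Fin n)) (Z : Matrix (Fin m) (Fin n) ℝ) :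
    0 ≤ ip (RΩ Ω Z) Z := by
  rw [ip_eq_sum_prod]
  exact Finset.sum_nonneg fun p _ => by
    simpa only [RΩ, Matrix.of_apply, mul_assoc] using
      mul_nonneg (Nat.cast_nonneg (Ω.count p)) (mul_self_nonneg (Z p.1 p.2))

lemma sqrt_ip_RΩ_add_le (Ω : Multiset (Fin m × Fin n)) (X Y : Matrix (Fin m) (Fin n) ℝ) :
    √(ip (RΩ Ω (X + Y)) (X + Y)) ≤ √(ip (RΩ Ω X) X) + √(ip (RΩ Ω Y) Y) := by
  simp only [sqrt_ip_RΩ_self_eq_norm]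
  refine le_of_eq_of_le ?_ (norm_add_le _ _)
  congr 1
  ext p
  simp [mul_add]

lemma ip_RΩ_self_le {Ω : Multiset (Fin m × Fin n)} {κ : ℝ} (h : ∀ Z, fro (RΩ Ω Z) ≤ κ * fro Z)
    (Y : Matrix (Fin m) (Fin n) ℝ) :
    ip (RΩ Ω Y) Y ≤ κ * fro Y ^ 2 :=
  calc ip (RΩ Ω Y) Y ≤ fro (RΩ Ω Y) * fro Y := (le_abs_self _).trans (abs_ip_le_fro_mul_fro _ _)
    _ ≤ κ * fro Y * fro Y := mul_le_mul_of_nonneg_right (h Y) (fro_nonneg Y)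
    _ = κ * fro Y ^ 2 := by ring

lemma card_eq_zero_or_two_le {Ω : Multiset (Fin m × Fin n)} {c : ℝ}
    (h : ∀ Z, fro (RΩ Ω Z) ≤ c * Real.log n * fro Z) :
    Ω.card = 0 ∨ 2 ≤ n := by
  refine or_iff_not_imp_right.2 fun hn => Multiset.card_eq_zero.2 <|
    Multiset.eq_zero_of_forall_notMem fun p hp => ?_
  have hlog : Real.log n = 0 := by
    obtain rfl | rfl := Nat.le_one_iff_eq_zero_or_eq_one.1 (Nat.le_of_lt_succ (not_le.1 hn))
    <;> simp
  have hentry := (abs_apply_le_fro (RΩ Ω (Matrix.of fun _ _ => 1)) p.1 p.2).trans (h _)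
  rw [hlog, mul_zero, zero_mul] at hentry
  have hcount : (1 : ℝ) ≤ Ω.count p := by exact_mod_cast Multiset.one_le_count_iff_mem.2 hp
  simp only [RΩ, Matrix.of_apply, mul_one, Prod.mk.eta, Nat.abs_cast] at hentry
  linarith

lemma sq_fro_le_two_mul_ip_RΩ {Ω : Multiset (Fin m × Fin n)} {U : Matrix (Fin m) (Fin r) ℝ}
    {V : Matrix (Fin n) (Fin r) ℝ} {c : ℝ}
    (h : ∀ Z, fro (c • PT U V (RΩ Ω (PT U V Z)) - PT U V Z) ≤ 1 / 2 * fro Z)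
    {X : Matrix (Fin m) (Fin n) ℝ} (hX : PT U V X = X) :
    fro X ^ 2 ≤ 2 * c * ip (RΩ Ω X) X := by
  have hW := h X
  rw [hX] at hW
  have hip : ip (c • PT U V (RΩ Ω X) - X) X = c * ip (RΩ Ω X) X - fro X ^ 2 := by
    rw [ip_sub_left, ip_smul_left, ip_PT_left, hX, sq_fro]
  have hcs := neg_le_of_abs_le (abs_ip_le_fro_mul_fro (c • PT U V (RΩ Ω X) - X) X)
  nlinarith [mul_le_mul_of_nonneg_right hW (fro_nonneg X)]

lemma le_of_absorb {lam Q N t F w k G : ℝ} (hlam : 0 < lam) (hQ : 0 ≤ Q) (hN : 0 ≤ N)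
    (hwk : w * k ≤ 1 / 4) (htF : t * F ≤ w * (√Q + k * N))
    (h : 1 / 2 * Q + lam / 2 * N ≤ lam * t * F + G) :
    N ≤ 2 * lam * w ^ 2 + 4 / lam * G := by
  have hamgm : lam * w * √Q ≤ 1 / 2 * Q + lam ^ 2 * w ^ 2 / 2 := by
    nlinarith [sq_nonneg (lam * w - √Q), Real.sq_sqrt hQ]
  have habs : lam * (w * k) * N ≤ lam / 4 * N := by
    have := mul_le_mul_of_nonneg_right hwk (mul_nonneg hlam.le hN)
    nlinarith
  have key : lam / 4 * N ≤ lam ^ 2 * w ^ 2 / 2 + G := by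
    nlinarith [mul_le_mul_of_nonneg_left htF hlam.le]
  calc N = 4 / lam * (lam / 4 * N) := by field_simp
    _ ≤ 4 / lam * (lam ^ 2 * w ^ 2 / 2 + G) := by gcongr
    _ = 2 * lam * w ^ 2 + 4 / lam * G := by field_simp; ring

lemma two_mul_add_four_div_le {lam ε : ℝ} (hlam : 0 < lam) (hsn : s = 0 ∨ 2 ≤ n) :
    2 * lam * (r * m / s) + 4 / lam * (2 * s * ε ^ 2 / (m * n)
        + 3 * m * n * r * Real.log (2 * n) * lam ^ 2 / (8 * s))
      ≤ 8 * s * ε ^ 2 / (m * n * lam) + 3 * m * n * r * Real.log (2 * n) * lam / s := by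
  set x : ℝ := lam * (r * m / s)
  have hx : 0 ≤ x := by positivity
  have hxL : x ≤ 3 * n * Real.log (2 * n) / 4 * x := by
    rcases hsn with rfl | hn
    · simp [x]
    · have hn' : (2 : ℝ) ≤ n := by exact_mod_cast hn
      have hlog : Real.log 2 ≤ Real.log (2 * n) := Real.log_le_log (by norm_num) (by linarith)
      have : (1 : ℝ) ≤ 3 * n * Real.log (2 * n) / 4 := by nlinarith [Real.log_two_gt_d9]
      nlinarith
  have e1 : 4 / lam * (2 * s * ε ^ 2 / (m * n)) = 8 * s * ε ^ 2 / (m * n * lam) := by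
    field_simp; ring
  have e2 : 4 / lam * (3 * m * n * r * Real.log (2 * n) * lam ^ 2 / (8 * s))
      = 3 * n * Real.log (2 * n) / 4 * x * 2 := by
    simp only [x]; field_simp; ring
  have e3 : 3 * m * n * r * Real.log (2 * n) * lam / s = 3 * n * Real.log (2 * n) / 4 * x * 4 := by
    simp only [x]; ring
  rw [mul_add, e1, e2, e3]
  linarith

lemma sqrt_mul_sqrt_le_quarter {β : ℝ} (hβ : 1 < β) (hsn : s = 0 ∨ 2 ≤ n)
    (h4 : (8 * Real.log n / 3) * √(r * m * β / s) ≤ 1 / 4) :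
    √(r * m / s) * √(8 / 3 * √β * Real.log n) ≤ 1 / 4 := by
  rcases hsn with rfl | hn
  · simp
  have hκ : 1 ≤ 8 / 3 * √β * Real.log n := by
    have hn' : (2 : ℝ) ≤ n := by exact_mod_cast hn
    have hlog : Real.log 2 ≤ Real.log n := Real.log_le_log (by norm_num) hn'
    have hb : 1 ≤ √β := Real.one_le_sqrt.2 hβ.le
    nlinarith [Real.log_two_gt_d9, mul_le_mul hb hlog (by positivity) (by positivity)]
  set κ : ℝ := 8 / 3 * √β * Real.log n
  have hκa : κ * √(r * m / s) ≤ 1 / 4 := by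
    refine le_of_eq_of_le ?_ h4
    rw [show (r * m * β / s : ℝ) = r * m / s * β by ring, Real.sqrt_mul (by positivity)]
    ring
  calc √(r * m / s) * √κ ≤ √(r * m / s) * κ := by
        gcongr
        exact (Real.sqrt_le_left (by linarith)).2 (by nlinarith)
    _ ≤ 1 / 4 := by linarith

lemma sqrt_div_mul_sqrt_le :
    √(r / (2 * n)) * √(2 * (m * n / s)) ≤ √(r * m / s) := by
  rw [← Real.sqrt_mul (by positivity)]
  refine Real.sqrt_le_sqrt ?_
  rcases eq_or_ne n 0 with rfl | hn
  · simp only [CharP.cast_eq_zero, mul_zero, div_zero, zero_mul]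
    positivity
  · exact le_of_eq (by field_simp)

theorem stmt7_general (m n r s : ℕ)
    (lam : ℝ) (hlam : 0 < lam) (ε : ℝ) (β : ℝ) (hβ : 1 < β)
    (U : Matrix (Fin m) (Fin r) ℝ) (V : Matrix (Fin n) (Fin r) ℝ)
    (hUo : Uᵀ * U = 1) (hVo : Vᵀ * V = 1)
    (Ω : Multiset (Fin m × Fin n)) (hcard : Ω.card = s)
    (Ar : Matrix (Fin m) (Fin n) ℝ) (hArT : PT U V Ar = Ar)
    (B : Matrix (Fin m) (Fin n) ℝ)
    -- (i): the key inequality from Theorem 4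
    (h1 : (1 / 2) * ip (RΩ Ω (Ar - B)) (Ar - B)
            + (lam / 2) * nuclearNorm (PTperp U V B)
          ≤ lam * Real.sqrt (r / (2 * n)) * fro (PT U V (Ar - B))
            + (2 * s * ε ^ 2 / (m * n)
                + 3 * m * n * r * Real.log (2 * n) * lam ^ 2 / (8 * s)))
    -- (ii): `(mn/s)·P_T∘R_Ω∘P_T − P_T` has Frobenius operator norm at most `1/2`
    (h2 : ∀ Z : Matrix (Fin m) (Fin n) ℝ,
        fro (((m * n : ℝ) / s) • PT U V (RΩ Ω (PT U V Z)) - PT U V Z)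
          ≤ (1 / 2) * fro Z)
    -- (iii): `R_Ω` has Frobenius operator norm at most `(8/3)·√β·log n`
    (h3 : ∀ Z : Matrix (Fin m) (Fin n) ℝ,
        fro (RΩ Ω Z) ≤ (8 / 3) * Real.sqrt β * Real.log n * fro Z)
    -- (iv)
    (h4 : (8 * Real.log n / 3) * Real.sqrt (r * m * β / s) ≤ 1 / 4) :
    fro (PTperp U V B) ≤ nuclearNorm (PTperp U V B) ∧
    nuclearNorm (PTperp U V B)
      ≤ 8 * s * ε ^ 2 / (m * n * lam) + 3 * m * n * r * Real.log (2 * n) * lam / s := by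
  refine ⟨fro_le_nuclearNorm _, ?_⟩
  set X := PT U V (Ar - B) with hX
  set Y := PTperp U V B
  set κ : ℝ := 8 / 3 * √β * Real.log n
  have hsn : s = 0 ∨ 2 ≤ n := hcard ▸ card_eq_zero_or_two_le h3
  have hfroX : fro X ≤ √(2 * (m * n / s)) * √(ip (RΩ Ω X) X) := by
    rw [← Real.sqrt_mul (by positivity), ← abs_of_nonneg (fro_nonneg X)]
    exact Real.abs_le_sqrt (sq_fro_le_two_mul_ip_RΩ h2 (PT_PT hUo hVo _))
  have hsampled : √(ip (RΩ Ω X) X) ≤ √(ip (RΩ Ω (Ar - B)) (Ar - B)) + √κ * nuclearNorm Y :=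
    calc √(ip (RΩ Ω X) X) ≤ √(ip (RΩ Ω (Ar - B)) (Ar - B)) + √(ip (RΩ Ω Y) Y) := by
          rw [hX, PT_sub_eq_add_PTperp hUo hVo hArT]
          exact sqrt_ip_RΩ_add_le Ω _ _
      _ ≤ √(ip (RΩ Ω (Ar - B)) (Ar - B)) + √κ * nuclearNorm Y := by
          grw [ip_RΩ_self_le h3 Y, Real.sqrt_mul' _ (sq_nonneg _), Real.sqrt_sq (fro_nonneg Y),
            fro_le_nuclearNorm Y]
  have hkey := le_of_absorb hlam (ip_RΩ_self_nonneg Ω _) (nuclearNorm_nonneg Y)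
    (sqrt_mul_sqrt_le_quarter hβ hsn h4)
    (by grw [hfroX, ← mul_assoc, sqrt_div_mul_sqrt_le, hsampled]) h1
  rw [Real.sq_sqrt (by positivity)] at hkey
  exact hkey.trans (two_mul_add_four_div_le hlam hsn)

/-- deterministic bound on `‖P_{T⊥}(B_*)‖_*`, first half of the
proof of Theorem 1: under hypotheses (i)–(iv),
`‖P_{T⊥}(B)‖_F ≤ ‖P_{T⊥}(B)‖_* ≤ 8sε²/(mnλ) + 3mnr log(2n) λ/s`. -/
theorem stmt7 (m n r s : ℕ) (hm : 0 < m) (hmn : m ≤ n)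
    (lam : ℝ) (hlam : 0 < lam) (ε : ℝ) (hε : 0 ≤ ε) (β : ℝ) (hβ : 1 < β)
    (U : Matrix (Fin m) (Fin r) ℝ) (V : Matrix (Fin n) (Fin r) ℝ)
    (hUo : Uᵀ * U = 1) (hVo : Vᵀ * V = 1)
    (Ω : Multiset (Fin m × Fin n)) (hcard : Ω.card = s)
    (Ar : Matrix (Fin m) (Fin n) ℝ) (hArT : PT U V Ar = Ar)
    (B : Matrix (Fin m) (Fin n) ℝ)
    -- (i): the key inequality from Theorem 4
    (h1 : (1 / 2) * ip (RΩ Ω (Ar - B)) (Ar - B)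
            + (lam / 2) * nuclearNorm (PTperp U V B)
          ≤ lam * Real.sqrt (r / (2 * n)) * fro (PT U V (Ar - B))
            + (2 * s * ε ^ 2 / (m * n)
                + 3 * m * n * r * Real.log (2 * n) * lam ^ 2 / (8 * s)))
    -- (ii): `(mn/s)·P_T∘R_Ω∘P_T − P_T` has Frobenius operator norm at most `1/2`
    (h2 : ∀ Z : Matrix (Fin m) (Fin n) ℝ,
        fro (((m * n : ℝ) / s) • PT U V (RΩ Ω (PT U V Z)) - PT U V Z)
          ≤ (1 / 2) * fro Z)
    -- (iii): `R_Ω` has Frobenius operator norm at most `(8/3)·√β·log n`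
    (h3 : ∀ Z : Matrix (Fin m) (Fin n) ℝ,
        fro (RΩ Ω Z) ≤ (8 / 3) * Real.sqrt β * Real.log n * fro Z)
    -- (iv)
    (h4 : (8 * Real.log n / 3) * Real.sqrt (r * m * β / s) ≤ 1 / 4) :
    fro (PTperp U V B) ≤ nuclearNorm (PTperp U V B) ∧
    nuclearNorm (PTperp U V B)
      ≤ 8 * s * ε ^ 2 / (m * n * lam) + 3 * m * n * r * Real.log (2 * n) * lam / s :=
  stmt7_general m n r s lam hlam ε β hβ U V hUo hVo Ω hcard Ar hArT B h1 h2 h3 h4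

end MC
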